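/- arXiv:2209.12978 — 10 statements merged into one kernel-verified Lean document; each statement's English description precedes it below -/
import Mathlib

section
/- Let f be a function from a closed interval [μ,ν] to the extended reals. If f is left lower semicontinuous at every point of (μ,ν] (i.e., f(α) ≤ liminf_{γ→α⁻} f(γ) for all α ∈ (μ,ν]), then f is Lebesgue measurable on [μ,ν]. -/
/-!
Left lower semicontinuity makes the superlevel set `{ξ ∈ (μ, ν] | r < f ξ}` a left neighbourhood
of each of its points, and such a set is Borel: it differs from its interior by a countable set,
since the points outside the interior are right endpoints of pairwise disjoint open intervals
inside it. The endpoint `μ` adds at most one point.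
-/

open Filter Set Topology

theorem MeasurableSet.of_mem_nhdsLT {α : Type*} [TopologicalSpace α] [LinearOrder α]
    [OrderTopology α] [SecondCountableTopology α] [MeasurableSpace α] [BorelSpace α]
    {s : Set α} (h : ∀ x ∈ s, s ∈ 𝓝[<] x) : MeasurableSet s :=
  MeasurableSet.of_mem_nhdsGT (α := αᵒᵈ) h

theorem setOf_lt_mem_nhdsLT_of_le_liminf {α β : Type*} [TopologicalSpace α] [LinearOrder α]
    [OrderClosedTopology α] [CompleteLinearOrder β] {f : α → β} {a x : α} {r : β}
    (hax : a < x) (hf : f x ≤ liminf f (𝓝[Ico a x] x)) (hr : r < f x) :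
    {y | r < f y} ∈ 𝓝[<] x := by
  rw [← nhdsWithin_Ico_eq_nhdsLT hax]
  exact eventually_lt_of_lt_liminf (hr.trans_le hf)

theorem measurableSet_Ioc_sep_lt_of_le_liminf {α β : Type*} [TopologicalSpace α]
    [LinearOrder α] [OrderTopology α] [SecondCountableTopology α] [MeasurableSpace α]
    [BorelSpace α] [CompleteLinearOrder β] {f : α → β} {a b : α}
    (hf : ∀ x ∈ Ioc a b, f x ≤ liminf f (𝓝[Ico a x] x)) (r : β) :
    MeasurableSet {x ∈ Ioc a b | r < f x} :=
  .of_mem_nhdsLT fun x ⟨hx, hrx⟩ =>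
    inter_mem (Ioc_mem_nhdsLT_of_mem hx) (setOf_lt_mem_nhdsLT_of_le_liminf hx.1 (hf x hx) hrx)

theorem stmt_1_general (μ ν : ℝ) (f : ℝ → EReal)
    (h : ∀ α ∈ Set.Ioc μ ν, f α ≤ Filter.liminf f (nhdsWithin α (Set.Ico μ α))) :
    ∀ r : ℝ, MeasurableSet {ξ ∈ Set.Icc μ ν | (r : EReal) < f ξ} := by
  intro r
  set T := {ξ ∈ Icc μ ν | (r : EReal) < f ξ}
  set S := {ξ ∈ Ioc μ ν | (r : EReal) < f ξ}
  have hST : S ⊆ T := fun ξ ⟨hξ, hr⟩ => ⟨Ioc_subset_Icc_self hξ, hr⟩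
  have hTS : T \ S ⊆ {μ} := fun ξ ⟨⟨hξ, hr⟩, hξS⟩ => by
    by_contra hξμ
    exact hξS ⟨⟨hξ.1.lt_of_ne' hξμ, hξ.2⟩, hr⟩
  rw [← union_sdiff_cancel hST]
  exact (measurableSet_Ioc_sep_lt_of_le_liminf h _).union
    (subsingleton_singleton.anti hTS).measurableSet

/-- If `f : [μ, ν] → ℝ ∪ {±∞}` is left lower semicontinuous at every point of `(μ, ν]`,
then `f` is measurable on `[μ, ν]`. -/
theorem stmt_1 (μ ν : ℝ) (hμν : μ < ν) (f : ℝ → EReal)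
    (h : ∀ α ∈ Set.Ioc μ ν, f α ≤ Filter.liminf f (nhdsWithin α (Set.Ico μ α))) :
    ∀ r : ℝ, MeasurableSet {ξ ∈ Set.Icc μ ν | (r : EReal) < f ξ} :=
  stmt_1_general μ ν f h
end

section
/- Let u and v be normal upper semicontinuous fuzzy sets in ℝ^m (level sets [u]_α, [v]_α are nonempty closed subsets of ℝ^m for α ∈ (0,1]). Then the function α ↦ H([u]_α, [v]_α) is Lebesgue measurable on [0,1]. -/
/-!
Each level-set map `α ↦ [u]_α` is antitone, so for every fixed point `y` the function
`α ↦ inf_{x ∈ [u]_α} ‖y - x‖` is monotone and hence measurable. Over a dense sequence `(q n)`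
the Hausdorff distance is the supremum of `|d(q n, A) - d(q n, B)|`, which makes
`α ↦ H([u]_α, [v]_α)` a countable supremum of measurable functions.
-/

open Set Metric

namespace Metric

variable {X : Type*} [PseudoEMetricSpace X]

theorem iSup_infEDist_le_iSup_infEDist_tsub {ι : Type*} {q : ι → X} (hq : DenseRange q)
    (s t : Set X) :
    ⨆ x ∈ s, infEDist x t ≤ ⨆ i, infEDist (q i) t - infEDist (q i) s := by
  set S := ⨆ i, infEDist (q i) t - infEDist (q i) s
  -- The inequality below holds on the dense set `range q` and is closed, so it holds everywhere.
  have hclosed : IsClosed {y | infEDist y t ≤ S + infEDist y s} :=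
    isClosed_le continuous_infEDist (continuous_const.add continuous_infEDist)
  have hrange : range q ⊆ {y | infEDist y t ≤ S + infEDist y s} := by
    rintro _ ⟨i, rfl⟩
    exact tsub_le_iff_right.1 (le_iSup (fun i => infEDist (q i) t - infEDist (q i) s) i)
  refine iSup₂_le fun x hx => ?_
  simpa [infEDist_zero_of_mem hx] using hclosed.closure_subset_iff.2 hrange (hq x)

theorem hausdorffEDist_eq_iSup_infEDist_tsub {ι : Type*} {q : ι → X} (hq : DenseRange q)
    (s t : Set X) :
    hausdorffEDist s t =
      ⨆ i, (infEDist (q i) t - infEDist (q i) s) ⊔ (infEDist (q i) s - infEDist (q i) t) := by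
  apply le_antisymm
  · rw [hausdorffEDist_def]
    exact sup_le
      ((iSup_infEDist_le_iSup_infEDist_tsub hq s t).trans (iSup_mono fun _ => le_sup_left))
      ((iSup_infEDist_le_iSup_infEDist_tsub hq t s).trans (iSup_mono fun _ => le_sup_right))
  · refine iSup_le fun i => sup_le ?_ ?_
    · rw [tsub_le_iff_left]
      exact infEDist_le_infEDist_add_hausdorffEDist
    · rw [tsub_le_iff_left, hausdorffEDist_comm]
      exact infEDist_le_infEDist_add_hausdorffEDist

theorem measurable_hausdorffEDist_of_antitone [TopologicalSpace.SeparableSpace X] [Nonempty X]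
    {β : Type*} [TopologicalSpace β] [MeasurableSpace β] [BorelSpace β] [LinearOrder β]
    [OrderClosedTopology β] {f g : β → Set X} (hf : Antitone f) (hg : Antitone g) :
    Measurable fun b => hausdorffEDist (f b) (g b) := by
  have hdist : ∀ (h : β → Set X), Antitone h → ∀ y : X, Measurable fun b => infEDist y (h b) :=
    fun h hh y => Monotone.measurable fun _ _ hab => infEDist_anti (hh hab)
  simp_rw [hausdorffEDist_eq_iSup_infEDist_tsub (TopologicalSpace.denseRange_denseSeq X)]
  exact Measurable.iSup fun n =>
    ((hdist g hg _).sub (hdist f hf _)).sup ((hdist f hf _).sub (hdist g hg _))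

end Metric

def fuzzyLevelSet {X : Type*} [TopologicalSpace X] (w : X → ℝ) (α : ℝ) : Set X :=
  if α ≤ 0 then closure {x | 0 < w x} else {x | α ≤ w x}

theorem antitone_fuzzyLevelSet {X : Type*} [TopologicalSpace X] (w : X → ℝ) :
    Antitone (fuzzyLevelSet w) := by
  intro a b hab
  unfold fuzzyLevelSet
  by_cases hb : b ≤ 0
  · simp [hb, hab.trans hb]
  · rw [if_neg hb]
    split_ifs
    · exact fun x hx => subset_closure ((not_le.1 hb).trans_le hx)
    · exact fun x hx => hab.trans hx

theorem stmt_5_general {m : ℕ} (u v : EuclideanSpace ℝ (Fin m) → ℝ) :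
    Measurable (fun α : Set.Icc (0 : ℝ) 1 =>
      EMetric.hausdorffEdist
        (if (α : ℝ) ≤ 0 then closure {x | 0 < u x} else {x | (α : ℝ) ≤ u x})
        (if (α : ℝ) ≤ 0 then closure {x | 0 < v x} else {x | (α : ℝ) ≤ v x})) :=
  (measurable_hausdorffEDist_of_antitone (antitone_fuzzyLevelSet u)
    (antitone_fuzzyLevelSet v)).comp measurable_subtype_coe

/-- For normal upper semicontinuous fuzzy sets `u, v` in `ℝ^m`, the function
`α ↦ H([u]_α, [v]_α)` is measurable on `[0,1]`. -/
theorem stmt_5 {m : ℕ} (u v : EuclideanSpace ℝ (Fin m) → ℝ)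
    (hu01 : ∀ x, u x ∈ Set.Icc (0 : ℝ) 1) (hv01 : ∀ x, v x ∈ Set.Icc (0 : ℝ) 1)
    (hu : ∀ α ∈ Set.Ioc (0 : ℝ) 1, {x | α ≤ u x}.Nonempty ∧ IsClosed {x | α ≤ u x})
    (hv : ∀ α ∈ Set.Ioc (0 : ℝ) 1, {x | α ≤ v x}.Nonempty ∧ IsClosed {x | α ≤ v x}) :
    Measurable (fun α : Set.Icc (0 : ℝ) 1 =>
      EMetric.hausdorffEdist
        (if (α : ℝ) ≤ 0 then closure {x | 0 < u x} else {x | (α : ℝ) ≤ u x})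
        (if (α : ℝ) ≤ 0 then closure {x | 0 < v x} else {x | (α : ℝ) ≤ v x})) :=
  stmt_5_general u v
end

section
/- Let (X,d) be a metric space, u a normal upper semicontinuous fuzzy set in X, and v a normal fuzzy set in X all of whose level sets [v]_α, α ∈ (0,1], are nonempty compact subsets of X. Then the function α ↦ H([u]_α, [v]_α) is Lebesgue measurable on [0,1]. -/
/-!
Write `U t = [u]_t`, `V t = [v]_t`, so that `H(U t, V t) = E₁ t ⊔ E₂ t` with
`E₁ t = ⨆ x ∈ U t, d(x, V t)` and `E₂ t = ⨆ y ∈ V t, d(y, U t)`.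

The compact sets `V s` decrease to `V t` as `s ↑ t`, hence converge to it in the Hausdorff
distance, and `E₁ t ≤ E₁ s + H(V s, V t)` for `s ≤ t`. So `E₁` is lower semicontinuous from the
left, and such a function is Borel: `{E₁ > c}` differs from its interior by a countable set, since
the left neighbourhoods of its non-interior points are pairwise disjoint.

For `E₂`, take a countable `D` dense in every `V t`. The inequality
`d(y, U t) ≤ E₂' t + d(y, V t)`, with `E₂' t = ⨆ d ∈ D, d(d, U t) - d(d, V t)`, holds on `D` and
both sides are continuous in `y`, so it holds on `V t`; hence `E₂ = E₂'`, a countable supremum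
of differences of monotone functions of `t`.
-/

open Set Filter Topology Metric
open scoped ENNReal

section LeftSemicontinuity

variable {α : Type*} [LinearOrder α] [TopologicalSpace α] [OrderTopology α] [DenselyOrdered α]
  [NoMinOrder α] [TopologicalSpace.SeparableSpace α] [MeasurableSpace α] [OpensMeasurableSpace α]

theorem measurableSet_of_mem_nhdsLE {s : Set α}
    (hs : ∀ x ∈ s, s ∈ 𝓝[≤] x) : MeasurableSet s := by
  choose! b hbx hbs using fun x hx => mem_nhdsLE_iff_exists_Ioc_subset.mp (hs x hx)
  have hIoo : ∀ x ∈ s, Ioo (b x) x ⊆ interior s := fun x hx =>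
    interior_maximal (Ioo_subset_Ioc_self.trans (hbs x hx)) isOpen_Ioo
  have hdisj : ∀ x ∈ s \ interior s, ∀ y ∈ s \ interior s, x < y →
      Disjoint (Ioo (b x) x) (Ioo (b y) y) := by
    intro x hx y hy hxy
    have hby : x ≤ b y := not_lt.mp fun h => hx.2 (hIoo y hy.1 ⟨h, hxy⟩)
    exact disjoint_left.mpr fun u hux huy => (huy.1.trans hux.2).not_ge hby
  have hcount : (s \ interior s).Countable := by
    refine PairwiseDisjoint.countable_of_isOpen (s := fun x => Ioo (b x) x)
      (fun x hx y hy hne => ?_) (fun _ _ => isOpen_Ioo) fun x hx => nonempty_Ioo.mpr (hbx x hx.1)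
    rcases hne.lt_or_gt with h | h
    · exact hdisj x hx y hy h
    · exact (hdisj y hy x hx h).symm
  rw [← union_sdiff_cancel (interior_subset (s := s))]
  exact isOpen_interior.measurableSet.union hcount.measurableSet

theorem measurable_of_lowerSemicontinuousWithinAt_Iic {β : Type*} [LinearOrder β]
    [TopologicalSpace β] [OrderTopology β] [SecondCountableTopology β] [MeasurableSpace β]
    [BorelSpace β] {f : α → β}
    (hf : ∀ x, LowerSemicontinuousWithinAt f (Iic x) x) : Measurable f :=
  measurable_of_Ioi fun c => measurableSet_of_mem_nhdsLE fun x hx => hf x c hx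

end LeftSemicontinuity

theorem lowerSemicontinuousWithinAt_of_le_add {α : Type*} [TopologicalSpace α]
    {f g : α → ℝ≥0∞} {s : Set α} {x : α} (hle : ∀ᶠ y in 𝓝[s] x, f x ≤ f y + g y)
    (hg : Tendsto g (𝓝[s] x) (𝓝 0)) : LowerSemicontinuousWithinAt f s x := by
  intro c hc
  obtain ⟨r, hr, hcr⟩ := ENNReal.lt_iff_exists_add_pos_lt.mp hc
  filter_upwards [hle, hg.eventually (gt_mem_nhds (ENNReal.coe_pos.mpr hr))] with y hfy hgy
  exact lt_of_add_lt_add_right (hcr.trans_le (hfy.trans (add_le_add_right hgy.le _)))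

section PseudoEMetricSpace

variable {X : Type*} [PseudoEMetricSpace X]

theorem tendsto_hausdorffEDist_superlevel_nhdsLE {v : X → ℝ} {a t : ℝ}
    (hat : a < t) (hcpt : IsCompact {x | a ≤ v x})
    (hclosed : ∀ s ∈ Ico a t, IsClosed {x | s ≤ v x}) :
    Tendsto (fun s => hausdorffEDist {x | s ≤ v x} {x | t ≤ v x}) (𝓝[≤] t) (𝓝 0) := by
  refine ENNReal.tendsto_nhds_zero.mpr fun ε hε => ?_
  set W := {x | infEDist x {x | t ≤ v x} < ε}
  have hW : IsOpen W := isOpen_lt continuous_infEDist continuous_const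
  have hInter : {x | a ≤ v x} ∩ ⋂ s : Ico a t, {x | (s : ℝ) ≤ v x} \ W = ∅ := by
    refine eq_empty_of_forall_notMem fun x ⟨hxa, hx⟩ => ?_
    simp only [mem_iInter, Set.mem_sdiff, mem_ofPred_eq, Subtype.forall, mem_Ico] at hx
    have htx : t ≤ v x := le_of_forall_lt_imp_le_of_dense fun s hst =>
      (le_or_gt a s).elim (fun has => (hx s ⟨has, hst⟩).1) fun hsa => hsa.le.trans hxa
    exact (hx a ⟨le_rfl, hat⟩).2 ((infEDist_zero_of_mem (s := {x | t ≤ v x}) htx).trans_lt hε)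
  have : Nonempty (Ico a t) := ⟨⟨a, le_rfl, hat⟩⟩
  obtain ⟨⟨s, hs⟩, hsW⟩ := hcpt.elim_directed_family_closed
    (fun s : Ico a t => {x | (s : ℝ) ≤ v x} \ W)
    (fun s => (hclosed s s.2).sdiff hW) hInter
    (directed_of_isDirected_le fun r s hrs x hx =>
      ⟨(Subtype.coe_le_coe.mpr hrs).trans hx.1, hx.2⟩)
  filter_upwards [Ioc_mem_nhdsLE hs.2] with r hr
  refine hausdorffEDist_le_of_infEDist (fun x hx => ?_) fun x hx => ?_
  · by_contra h
    exact hsW.subset ⟨hs.1.trans (hr.1.le.trans hx), hr.1.le.trans hx, fun hxW => h hxW.le⟩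
  · exact (infEDist_zero_of_mem (s := {x | r ≤ v x}) (hr.2.trans hx)).trans_le zero_le

theorem iSup_infEDist_le_iSup_infEDist_add_hausdorffEDist {U U' V V' : Set X} (hU : U' ⊆ U) :
    ⨆ x ∈ U', infEDist x V' ≤ (⨆ x ∈ U, infEDist x V) + hausdorffEDist V V' :=
  iSup₂_le fun x hx => infEDist_le_infEDist_add_hausdorffEDist.trans
    (add_le_add_left (le_iSup₂ (f := fun x _ => infEDist x V) x (hU hx)) _)

theorem iSup_infEDist_eq_iSup_infEDist_tsub {U V D : Set X} (hV : V ⊆ closure D) :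
    ⨆ y ∈ V, infEDist y U = ⨆ d ∈ D, (infEDist d U - infEDist d V) := by
  set T := ⨆ d ∈ D, (infEDist d U - infEDist d V)
  refine le_antisymm (iSup₂_le fun y hy => ?_) (iSup₂_le fun d _ => ?_)
  · have hclosed : IsClosed {y | infEDist y U ≤ T + infEDist y V} :=
      isClosed_le continuous_infEDist (continuous_const.add continuous_infEDist)
    have hD : D ⊆ {y | infEDist y U ≤ T + infEDist y V} := fun d hd =>
      tsub_le_iff_right.mp (le_iSup₂ (f := fun d _ => infEDist d U - infEDist d V) d hd)
    simpa [infEDist_zero_of_mem hy] using closure_minimal hD hclosed (hV hy)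
  · refine tsub_le_iff_tsub_le.mp (le_infEDist.mpr fun y hy => tsub_le_iff_left.mpr ?_)
    exact infEDist_le_infEDist_add_edist.trans
      (add_le_add_left (le_iSup₂ (f := fun y _ => infEDist y U) y hy) _)

theorem exists_countable_superlevel_subset_closure {v : X → ℝ} {a b : ℝ}
    (hv : ∀ α ∈ Ioc a b, IsCompact {x | α ≤ v x}) :
    ∃ D : Set X, D.Countable ∧ ∀ α ∈ Ioc a b, {x | α ≤ v x} ⊆ closure D := by
  have hsep : TopologicalSpace.IsSeparable
      (⋃ (q : ℚ) (_ : (q : ℝ) ∈ Ioc a b), {x | (q : ℝ) ≤ v x}) :=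
    .iUnion fun q => .iUnion fun hq => (hv q hq).isSeparable
  obtain ⟨D, hDc, hD⟩ := hsep
  refine ⟨D, hDc, fun α hα x hx => hD ?_⟩
  obtain ⟨q, haq, hqα⟩ := exists_rat_btwn hα.1
  exact mem_iUnion₂.mpr ⟨q, ⟨haq, hqα.le.trans hα.2⟩, hqα.le.trans hx⟩

end PseudoEMetricSpace

theorem measurable_indicator_hausdorffEDist_superlevel {X : Type*} [EMetricSpace X]
    (u v : X → ℝ) {a b : ℝ} (hv : ∀ α ∈ Ioc a b, IsCompact {x | α ≤ v x}) :
    Measurable ((Ioc a b).indicator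
      fun t => hausdorffEDist {x | t ≤ u x} {x | t ≤ v x}) := by
  obtain ⟨D, hDc, hD⟩ := exists_countable_superlevel_subset_closure hv
  set E₁ : ℝ → ℝ≥0∞ := fun t => ⨆ x ∈ {x | t ≤ u x}, infEDist x {x | t ≤ v x}
  set E₂ : ℝ → ℝ≥0∞ := fun t => ⨆ d ∈ D, (infEDist d {x | t ≤ u x} - infEDist d {x | t ≤ v x})
  have hsplit : (Ioc a b).indicator (fun t => hausdorffEDist {x | t ≤ u x} {x | t ≤ v x}) =
      (Ioc a b).indicator E₁ ⊔ (Ioc a b).indicator E₂ := by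
    funext t
    by_cases ht : t ∈ Ioc a b
    · simp only [Pi.sup_apply, indicator_of_mem ht, hausdorffEDist_def, E₁, E₂,
        iSup_infEDist_eq_iSup_infEDist_tsub (hD t ht)]
    · simp only [Pi.sup_apply, indicator_of_notMem ht, max_self]
  have hE₁ : ∀ t, LowerSemicontinuousWithinAt ((Ioc a b).indicator E₁) (Iic t) t := by
    intro t
    by_cases ht : t ∈ Ioc a b
    · obtain ⟨a', haa', ha't⟩ := exists_between ht.1
      have hcpt : ∀ s ∈ Icc a' t, IsCompact {x | s ≤ v x} := fun s hs =>
        hv s ⟨haa'.trans_le hs.1, hs.2.trans ht.2⟩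
      have hlsc : LowerSemicontinuousWithinAt E₁ (Iic t) t :=
        lowerSemicontinuousWithinAt_of_le_add
          (eventually_nhdsWithin_of_forall fun s hs =>
            iSup_infEDist_le_iSup_infEDist_add_hausdorffEDist
              fun x (hx : t ≤ u x) => (hs.trans hx : s ≤ u x))
          (tendsto_hausdorffEDist_superlevel_nhdsLE ha't (hcpt a' ⟨le_rfl, ha't.le⟩)
            fun s hs => (hcpt s (Ico_subset_Icc_self hs)).isClosed)
      refine hlsc.congr_of_eventuallyEq self_mem_Iic ?_
      filter_upwards [Ioc_mem_nhdsLE ht.1] with s hs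
      exact (indicator_of_mem (Ioc_subset_Ioc_right ht.2 hs) _).symm
    · intro c hc
      simp [indicator_of_notMem ht] at hc
  have hE₂ : Measurable E₂ := by
    have : Countable D := hDc.to_subtype
    have hmono : ∀ (w : X → ℝ) (d : X), Monotone fun t => infEDist d {x | t ≤ w x} :=
      fun w d s t hst => infEDist_anti fun x hx => hst.trans hx
    simp only [E₂, iSup_subtype']
    exact .iSup fun d => (hmono u d).measurable.sub (hmono v d).measurable
  rw [hsplit]
  exact (measurable_of_lowerSemicontinuousWithinAt_Iic hE₁).sup (hE₂.indicator measurableSet_Ioc)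

theorem stmt_6_general {X : Type*} [MetricSpace X] (u v : X → ℝ)
    (hv : ∀ α ∈ Set.Ioc (0 : ℝ) 1, {x | α ≤ v x}.Nonempty ∧ IsCompact {x | α ≤ v x}) :
    Measurable (fun α : Set.Icc (0 : ℝ) 1 =>
      EMetric.hausdorffEdist
        (if (α : ℝ) ≤ 0 then closure {x | 0 < u x} else {x | (α : ℝ) ≤ u x})
        (if (α : ℝ) ≤ 0 then closure {x | 0 < v x} else {x | (α : ℝ) ≤ v x})) := by
  have hF := (measurable_indicator_hausdorffEDist_superlevel u v fun α hα =>
    (hv α hα).2).comp (measurable_subtype_coe (p := (· ∈ Icc (0 : ℝ) 1)))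
  convert Measurable.ite (measurableSet_le measurable_subtype_coe
    (measurable_const (a := (0 : ℝ)))) measurable_const hF using 2 with α
  split_ifs with hα
  · rfl
  · rw [Function.comp_apply,
      indicator_of_mem (show (α : ℝ) ∈ Ioc 0 1 from ⟨not_le.mp hα, α.2.2⟩)]
    rfl
  · infer_instance

/-- Let `u` be a normal upper semicontinuous fuzzy set in a metric space `X` and let `v`
be a normal fuzzy set all of whose level sets (for `α ∈ (0,1]`) are nonempty compact.
Then `α ↦ H([u]_α, [v]_α)` is measurable on `[0,1]`. -/
theorem stmt_6 {X : Type*} [MetricSpace X] (u v : X → ℝ)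
    (hu01 : ∀ x, u x ∈ Set.Icc (0 : ℝ) 1) (hv01 : ∀ x, v x ∈ Set.Icc (0 : ℝ) 1)
    (hu : ∀ α ∈ Set.Ioc (0 : ℝ) 1, {x | α ≤ u x}.Nonempty ∧ IsClosed {x | α ≤ u x})
    (hv : ∀ α ∈ Set.Ioc (0 : ℝ) 1, {x | α ≤ v x}.Nonempty ∧ IsCompact {x | α ≤ v x}) :
    Measurable (fun α : Set.Icc (0 : ℝ) 1 =>
      EMetric.hausdorffEdist
        (if (α : ℝ) ≤ 0 then closure {x | 0 < u x} else {x | (α : ℝ) ≤ u x})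
        (if (α : ℝ) ≤ 0 then closure {x | 0 < v x} else {x | (α : ℝ) ≤ v x})) :=
  stmt_6_general u v hv
end

section
/- Let (X,d) be a metric space and let u, v be normal fuzzy sets in X all of whose level sets [u]_α, [v]_α (α ∈ (0,1]) are nonempty compact. Then the function α ↦ H([u]_α, [v]_α) is left continuous at every α ∈ (0,1]. -/
/-!
The level sets `[w]_β`, `0 < β < α`, are compact and decrease to `[w]_α` as `β ↑ α`, so by
compactness each neighbourhood `{x | infEdist x [w]_α < ε}` of `[w]_α` already contains some
`[w]_β`; since also `[w]_α ⊆ [w]_β`, this gives `H([w]_β, [w]_α) → 0`. In other words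
`β ↦ [w]_β` is left continuous into the space of closed sets with the Hausdorff distance, and
the theorem follows from the continuity of the distance there.
-/

open Set Filter Topology Metric TopologicalSpace

section SuperlevelSets

variable {X : Type*} {w : X → ℝ} {α : ℝ}

theorem eventually_setOf_le_subset_of_isOpen [TopologicalSpace X] [T2Space X] (hα : 0 < α)
    (hw : ∀ β ∈ Ioo 0 α, IsCompact {x | β ≤ w x}) {U : Set X} (hU : IsOpen U)
    (hsub : {x | α ≤ w x} ⊆ U) : ∀ᶠ β in 𝓝[<] α, {x | β ≤ w x} ⊆ U := by
  have : Nonempty (Ioo 0 α) := ⟨⟨α / 2, half_pos hα, half_lt_self hα⟩⟩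
  have hanti : Antitone fun β : Ioo 0 α => {x | (β : ℝ) ≤ w x} :=
    fun _ _ hβγ _ hx => (Subtype.coe_le_coe.2 hβγ).trans hx
  have hinter : (⋂ β : Ioo 0 α, {x | (β : ℝ) ≤ w x}) ⊆ {x | α ≤ w x} := by
    refine fun x hx => show α ≤ w x from le_of_not_gt fun hlt => ?_
    obtain ⟨β, hwβ, hβα⟩ := exists_between (max_lt hlt hα)
    have hβ : β ≤ w x :=
      mem_iInter.1 hx ⟨β, (le_max_right _ _).trans_lt hwβ, hβα⟩
    exact (le_max_left _ _).not_gt (hwβ.trans_le hβ)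
  obtain ⟨⟨β₀, hβ₀⟩, hβ₀U⟩ := exists_subset_nhds_of_isCompact hanti.directed_ge
    (fun β => hw β β.2) (fun x hx => hU.mem_nhds (hsub (hinter hx)))
  filter_upwards [Ioo_mem_nhdsLT hβ₀.2] with β hβ
  exact fun x hx => hβ₀U (hβ.1.le.trans hx)

theorem tendsto_hausdorffEDist_setOf_le [EMetricSpace X] (hα : 0 < α)
    (hw : ∀ β ∈ Ioo 0 α, IsCompact {x | β ≤ w x}) :
    Tendsto (fun β => hausdorffEDist {x | β ≤ w x} {x | α ≤ w x}) (𝓝[<] α) (𝓝 0) := by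
  rw [ENNReal.tendsto_nhds_zero]
  intro ε hε
  have hnbhd : {x | α ≤ w x} ⊆ {x | infEDist x {x | α ≤ w x} < ε} :=
    fun x hx => by simpa [infEDist_zero_of_mem hx] using hε
  filter_upwards [eventually_setOf_le_subset_of_isOpen hα hw
      (isOpen_lt continuous_infEDist continuous_const) hnbhd, self_mem_nhdsWithin]
    with β hβU hβα
  refine hausdorffEDist_le_of_mem_edist (fun x hx => ?_) fun x hx => ⟨x, ?_, by simp⟩
  · obtain ⟨y, hy, hxy⟩ := infEDist_lt_iff.1 (hβU hx)
    exact ⟨y, hy, hxy.le⟩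
  · exact (show β ≤ α from le_of_lt hβα).trans hx

theorem tendsto_closure_setOf_le [EMetricSpace X] (hα : 0 < α)
    (hw : ∀ β ∈ Ioo 0 α, IsCompact {x | β ≤ w x}) :
    Tendsto (fun β => Closeds.closure {x | β ≤ w x}) (𝓝[<] α)
      (𝓝 (Closeds.closure {x | α ≤ w x})) := by
  rw [tendsto_iff_edist_tendsto_0]
  simpa only [Closeds.edist_eq, Closeds.coe_closure, hausdorffEDist_closure]
    using tendsto_hausdorffEDist_setOf_le hα hw

end SuperlevelSets

theorem stmt_7_general {X : Type*} [MetricSpace X] (u v : X → ℝ)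
    (hu : ∀ α ∈ Set.Ioc (0 : ℝ) 1, {x | α ≤ u x}.Nonempty ∧ IsCompact {x | α ≤ u x})
    (hv : ∀ α ∈ Set.Ioc (0 : ℝ) 1, {x | α ≤ v x}.Nonempty ∧ IsCompact {x | α ≤ v x}) :
    ∀ α ∈ Set.Ioc (0 : ℝ) 1,
      Filter.Tendsto (fun β : ℝ => EMetric.hausdorffEdist {x | β ≤ u x} {x | β ≤ v x})
        (nhdsWithin α (Set.Ioo 0 α))
        (nhds (EMetric.hausdorffEdist {x | α ≤ u x} {x | α ≤ v x})) := by
  intro α hα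
  have below {w : X → ℝ} (hw : ∀ α ∈ Ioc (0 : ℝ) 1, IsCompact {x | α ≤ w x}) :
      ∀ β ∈ Ioo 0 α, IsCompact {x | β ≤ w x} :=
    fun β hβ => hw β ⟨hβ.1, hβ.2.le.trans hα.2⟩
  rw [nhdsWithin_Ioo_eq_nhdsLT hα.1]
  have h := (tendsto_closure_setOf_le hα.1 (below fun α h => (hu α h).2)).edist
    (tendsto_closure_setOf_le hα.1 (below fun α h => (hv α h).2))
  simp only [Closeds.edist_eq, Closeds.coe_closure, hausdorffEDist_closure] at h
  exact h

/-- For normal fuzzy sets `u, v` in a metric space with nonempty compact level sets,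
the function `α ↦ H([u]_α, [v]_α)` is left continuous at every `α ∈ (0,1]`. -/
theorem stmt_7 {X : Type*} [MetricSpace X] (u v : X → ℝ)
    (hu01 : ∀ x, u x ∈ Set.Icc (0 : ℝ) 1) (hv01 : ∀ x, v x ∈ Set.Icc (0 : ℝ) 1)
    (hu : ∀ α ∈ Set.Ioc (0 : ℝ) 1, {x | α ≤ u x}.Nonempty ∧ IsCompact {x | α ≤ u x})
    (hv : ∀ α ∈ Set.Ioc (0 : ℝ) 1, {x | α ≤ v x}.Nonempty ∧ IsCompact {x | α ≤ v x}) :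
    ∀ α ∈ Set.Ioc (0 : ℝ) 1,
      Filter.Tendsto (fun β : ℝ => EMetric.hausdorffEdist {x | β ≤ u x} {x | β ≤ v x})
        (nhdsWithin α (Set.Ioo 0 α))
        (nhds (EMetric.hausdorffEdist {x | α ≤ u x} {x | α ≤ v x})) :=
  stmt_7_general u v hu hv
end

section
/- Let u be a fuzzy set in a set Y. Then for each α ∈ (0,1], the level set [u]_α = {x ∈ Y : u(x) ≥ α} equals the intersection ⋂_{β < α} [u]_β over all β ∈ [0,α). Conversely, if {v(α) : α ∈ (0,1]} is a family of subsets of Y satisfying v(α) = ⋂_{β<α} v(β) for all α ∈ (0,1], then u(x) := sup{α ∈ (0,1] : x ∈ v(α)} (with sup ∅ = 0) is the unique fuzzy set in Y with [u]_α = v(α) for all α ∈ (0,1]. -/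
open Set

/-- Representation theorem for fuzzy sets: level sets satisfy
`[u]_α = ⋂_{β < α} [u]_β`, and conversely a family of sets with this property is the
family of level sets of a unique fuzzy set, given by `u x = sup {α ∈ (0,1] : x ∈ v α}`
(with `sup ∅ = 0`). -/
theorem stmt_11 {Y : Type*} :
    (∀ u : Y → ℝ, (∀ x, u x ∈ Set.Icc (0 : ℝ) 1) →
      ∀ α ∈ Set.Ioc (0 : ℝ) 1, {x | α ≤ u x} = ⋂ β ∈ Set.Ico (0 : ℝ) α, {x | β ≤ u x}) ∧
    (∀ v : ℝ → Set Y, (∀ α ∈ Set.Ioc (0 : ℝ) 1, v α = ⋂ β ∈ Set.Ioo (0 : ℝ) α, v β) →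
      (∀ x : Y, sSup {α : ℝ | α ∈ Set.Ioc (0 : ℝ) 1 ∧ x ∈ v α} ∈ Set.Icc (0 : ℝ) 1) ∧
      (∀ α ∈ Set.Ioc (0 : ℝ) 1,
        {x : Y | α ≤ sSup {α' : ℝ | α' ∈ Set.Ioc (0 : ℝ) 1 ∧ x ∈ v α'}} = v α) ∧
      (∀ w : Y → ℝ, (∀ x, w x ∈ Set.Icc (0 : ℝ) 1) →
        (∀ α ∈ Set.Ioc (0 : ℝ) 1, {x | α ≤ w x} = v α) →
        w = fun x => sSup {α : ℝ | α ∈ Set.Ioc (0 : ℝ) 1 ∧ x ∈ v α})) := by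
  constructor
  · intro u hu α hα
    ext x
    simp only [mem_setOf_eq, mem_iInter, mem_Ico]
    constructor
    · intro h β hβ
      exact le_trans hβ.2.le h
    · intro h
      by_contra hlt
      push_neg at hlt
      have h0 : (0:ℝ) ≤ u x := (hu x).1
      have hβ : max 0 ((u x + α)/2) ∈ Ico (0:ℝ) α := by
        constructor
        · exact le_max_left _ _
        · exact max_lt hα.1 (by linarith)
      have := h _ ⟨hβ.1, hβ.2⟩
      have : (u x + α)/2 ≤ u x := le_trans (le_max_right _ _) this
      linarith
  · intro v hv
    -- antitone property
    have anti : ∀ β γ : ℝ, 0 < β → β < γ → γ ≤ 1 → v γ ⊆ v β := by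
      intro β γ hβ hβγ hγ
      rw [hv γ ⟨hβ.trans hβγ, hγ⟩]
      exact biInter_subset_of_mem ⟨hβ, hβγ⟩
    have hbdd : ∀ x : Y, BddAbove {α : ℝ | α ∈ Set.Ioc (0 : ℝ) 1 ∧ x ∈ v α} :=
      fun x => ⟨1, fun a ha => ha.1.2⟩
    refine ⟨?_, ?_, ?_⟩
    · intro x
      constructor
      · exact Real.sSup_nonneg (fun a ha => ha.1.1.le)
      · exact Real.sSup_le (fun a ha => ha.1.2) zero_le_one
    · intro α hα
      ext x
      simp only [mem_setOf_eq]
      constructor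
      · intro h
        rw [hv α hα]
        refine mem_iInter₂.mpr fun β hβ => ?_
        have hβs : β < sSup {α' : ℝ | α' ∈ Set.Ioc (0 : ℝ) 1 ∧ x ∈ v α'} :=
          lt_of_lt_of_le hβ.2 h
        rcases eq_empty_or_nonempty {α' : ℝ | α' ∈ Set.Ioc (0 : ℝ) 1 ∧ x ∈ v α'} with he | hne
        · rw [he, Real.sSup_empty] at hβs
          exact absurd hβs (not_lt.mpr hβ.1.le)
        · obtain ⟨γ, hγ, hβγ⟩ := exists_lt_of_lt_csSup hne hβs
          exact anti β γ hβ.1 hβγ hγ.1.2 hγ.2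
      · intro h
        exact le_csSup (hbdd x) ⟨hα, h⟩
    · intro w hw hwv
      funext x
      have hset : {α : ℝ | α ∈ Set.Ioc (0 : ℝ) 1 ∧ x ∈ v α} = Ioc 0 (w x) := by
        ext a
        simp only [mem_setOf_eq, mem_Ioc]
        constructor
        · rintro ⟨ha, hx⟩
          rw [← hwv a ha] at hx
          exact ⟨ha.1, hx⟩
        · rintro ⟨h0, h1⟩
          have ha : a ∈ Set.Ioc (0:ℝ) 1 := ⟨h0, h1.trans (hw x).2⟩
          refine ⟨ha, ?_⟩
          rw [← hwv a ha]
          exact h1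
      rw [hset]
      rcases lt_or_eq_of_le (hw x).1 with h0 | h0
      · exact (csSup_Ioc h0).symm
      · rw [← h0, Ioc_self, Real.sSup_empty]
end

section
/- Let J be a nonempty index set and for each j ∈ J let (X_j, d_j) be a metric space and A_j ⊆ X_j. In the product ∏_j X_j equipped with the sup extended metric d_J(x,y) = sup_j d_j(x_j, y_j), the closure of ∏_j A_j equals ∏_j closure(A_j). -/
open Set ENNReal

/-- In a product of metric spaces equipped with the sup extended metric
`d_J(x,y) = ⨆ j, d_j (x j) (y j)`, the closure of `∏ j, A j` (characterized by the usual
`ε`-description of metric closure) equals `∏ j, closure (A j)`. -/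
theorem stmt_12 {J : Type*} [Nonempty J] {X : J → Type*} [∀ j, MetricSpace (X j)]
    (A : ∀ j, Set (X j)) :
    {x : ∀ j, X j | ∀ ε : ℝ≥0∞, 0 < ε →
        ∃ a ∈ Set.univ.pi A, (⨆ j, edist (x j) (a j)) < ε} =
      Set.univ.pi fun j => closure (A j) := by
  ext x
  simp only [mem_setOf_eq, mem_pi, mem_univ, forall_true_left]
  constructor
  · intro h j
    rw [EMetric.mem_closure_iff]
    intro ε hε
    obtain ⟨a, ha, hlt⟩ := h ε hε
    exact ⟨a j, ha j, lt_of_le_of_lt (le_iSup (fun j => edist (x j) (a j)) j) hlt⟩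
  · intro h ε hε
    set δ : ℝ≥0∞ := min ε 1 / 2 with hδdef
    have hmin : 0 < min ε 1 := lt_min hε zero_lt_one
    have hmintop : min ε 1 ≠ ⊤ := ((min_le_right ε 1).trans_lt one_lt_top).ne
    have hδpos : 0 < δ := ENNReal.div_pos hmin.ne' (by norm_num)
    have hδlt : δ < ε := lt_of_lt_of_le (ENNReal.half_lt_self hmin.ne' hmintop)
      (min_le_left ε 1)
    have : ∀ j, ∃ a ∈ A j, edist (x j) a < δ := fun j =>
      EMetric.mem_closure_iff.mp (h j) δ hδpos
    choose a ha hd using this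
    refine ⟨a, ha, lt_of_le_of_lt (iSup_le fun j => (hd j).le) hδlt⟩
end

section
/- Let J be a nonempty index set, and for each j ∈ J let (X_j, d_j) be a metric space and A_j, B_j nonempty closed subsets of X_j. Then in the product space with sup extended metric d_J, (i) ∏_j A_j and ∏_j B_j are nonempty closed; (ii) for each x ∈ ∏_j X_j, d_J(x, ∏_j B_j) = sup_j d_j(x_j, B_j); (iii) H*(∏_j A_j, ∏_j B_j) = sup_j H*(A_j, B_j); (iv) H(∏_j A_j, ∏_j B_j) = sup_j H(A_j, B_j). -/
open Set ENNReal

variable {J : Type*} {X : J → Type*} [∀ j, MetricSpace (X j)]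

/-- The sup extended metric on the product `∀ j, X j`. -/
noncomputable def piEdist (x y : ∀ j, X j) : ℝ≥0∞ := ⨆ j, edist (x j) (y j)

/-- Distance from a point to a set with respect to `piEdist`. -/
noncomputable def piInfEdist (x : ∀ j, X j) (S : Set (∀ j, X j)) : ℝ≥0∞ :=
  ⨅ s ∈ S, piEdist x s

/-- The Hausdorff pre-distance `H*` with respect to `piEdist`. -/
noncomputable def piHstar (S T : Set (∀ j, X j)) : ℝ≥0∞ := ⨆ x ∈ S, piInfEdist x T

/-!
The sup metric sees each coordinate separately and a point of `∏ B j` is chosen coordinatewise,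
so `d(x, ∏ B j) = ⨆ j, d(x j, B j)`: given `ε > 0`, pick `b j ∈ B j` within `ε` of optimal in
every coordinate at once. Hence the points at distance `0` from `∏ A j` form `∏ closure (A j)`,
and for `H*` any `a ∈ A j` extends to a point of `∏ A j` whose distance to `∏ B j` is at least
`d(a, B j)`.
-/

lemma edist_le_piEdist (x y : ∀ j, X j) (j : J) : edist (x j) (y j) ≤ piEdist x y :=
  le_iSup (fun i => edist (x i) (y i)) j

lemma piInfEdist_eq_zero_iff (x : ∀ j, X j) (S : Set (∀ j, X j)) :
    piInfEdist x S = 0 ↔ ∀ ε : ℝ≥0∞, 0 < ε → ∃ s ∈ S, piEdist x s < ε := by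
  simp only [← nonpos_iff_eq_zero, ← forall_gt_iff_le, piInfEdist, iInf_lt_iff, exists_prop]

lemma piInfEdist_univ_pi (x : ∀ j, X j) (B : ∀ j, Set (X j)) :
    piInfEdist x (univ.pi B) = ⨆ j, Metric.infEDist (x j) (B j) := by
  refine le_antisymm (ENNReal.le_of_forall_pos_le_add fun ε hε hfin => ?_) ?_
  · have near : ∀ j, ∃ b ∈ B j, edist (x j) b < (⨆ i, Metric.infEDist (x i) (B i)) + ε := by
      intro j
      rw [← Metric.infEDist_lt_iff]
      calc Metric.infEDist (x j) (B j) ≤ ⨆ i, Metric.infEDist (x i) (B i) :=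
            le_iSup (fun i => Metric.infEDist (x i) (B i)) j
        _ < _ := ENNReal.lt_add_right hfin.ne (by exact_mod_cast hε.ne')
    choose b hb hb_near using near
    calc piInfEdist x (univ.pi B) ≤ piEdist x b := iInf₂_le b fun j _ => hb j
      _ ≤ _ := iSup_le fun j => (hb_near j).le
  · exact le_iInf₂ fun b hb => iSup_le fun j =>
      (Metric.infEDist_le_edist_of_mem (hb j (mem_univ j))).trans (edist_le_piEdist x b j)

lemma piInfEdist_univ_pi_eq_zero_iff (x : ∀ j, X j) (A : ∀ j, Set (X j)) :
    piInfEdist x (univ.pi A) = 0 ↔ x ∈ univ.pi fun j => closure (A j) := by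
  simp only [piInfEdist_univ_pi, ENNReal.iSup_eq_zero, mem_univ_pi,
    Metric.mem_closure_iff_infEDist_zero]

lemma setOf_forall_exists_piEdist_lt_eq_univ_pi (A : ∀ j, Set (X j))
    (hA : ∀ j, IsClosed (A j)) :
    {x : ∀ j, X j | ∀ ε : ℝ≥0∞, 0 < ε → ∃ a ∈ univ.pi A, piEdist x a < ε} = univ.pi A := by
  ext x
  rw [mem_setOf_eq, ← piInfEdist_eq_zero_iff, piInfEdist_univ_pi_eq_zero_iff]
  simp only [(hA _).closure_eq]

lemma piHstar_univ_pi (A B : ∀ j, Set (X j)) (hA : ∀ j, (A j).Nonempty) :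
    piHstar (univ.pi A) (univ.pi B) = ⨆ j, ⨆ a ∈ A j, Metric.infEDist a (B j) := by
  classical
  refine le_antisymm (iSup₂_le fun x hx => ?_) (iSup_le fun j => iSup₂_le fun a ha => ?_)
  · rw [piInfEdist_univ_pi]
    exact iSup_mono fun j =>
      le_iSup₂ (f := fun a (_ : a ∈ A j) => Metric.infEDist a (B j)) (x j) (hx j (mem_univ j))
  · choose c hc using hA
    have hx : Function.update c j a ∈ univ.pi A := by
      intro i _
      rcases eq_or_ne i j with rfl | hij
      · simpa using ha
      · simpa [Function.update_of_ne hij] using hc i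
    calc Metric.infEDist a (B j) = Metric.infEDist (Function.update c j a j) (B j) := by simp
      _ ≤ ⨆ i, Metric.infEDist (Function.update c j a i) (B i) :=
          le_iSup (fun i => Metric.infEDist (Function.update c j a i) (B i)) j
      _ = piInfEdist (Function.update c j a) (univ.pi B) := (piInfEdist_univ_pi _ B).symm
      _ ≤ piHstar (univ.pi A) (univ.pi B) :=
          le_iSup₂ (f := fun y (_ : y ∈ univ.pi A) => piInfEdist y (univ.pi B)) _ hx

theorem stmt_13_general (A B : ∀ j, Set (X j))
    (hA : ∀ j, (A j).Nonempty ∧ IsClosed (A j))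
    (hB : ∀ j, (B j).Nonempty ∧ IsClosed (B j)) :
    ((Set.univ.pi A).Nonempty ∧ (Set.univ.pi B).Nonempty ∧
      {x : ∀ j, X j | ∀ ε : ℝ≥0∞, 0 < ε → ∃ a ∈ Set.univ.pi A, piEdist x a < ε} =
        Set.univ.pi A ∧
      {x : ∀ j, X j | ∀ ε : ℝ≥0∞, 0 < ε → ∃ b ∈ Set.univ.pi B, piEdist x b < ε} =
        Set.univ.pi B) ∧
    (∀ x : ∀ j, X j,
      piInfEdist x (Set.univ.pi B) = ⨆ j, EMetric.infEdist (x j) (B j)) ∧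
    (piHstar (Set.univ.pi A) (Set.univ.pi B) = ⨆ j, ⨆ a ∈ A j, EMetric.infEdist a (B j)) ∧
    (max (piHstar (Set.univ.pi A) (Set.univ.pi B)) (piHstar (Set.univ.pi B) (Set.univ.pi A)) =
      ⨆ j, EMetric.hausdorffEdist (A j) (B j)) := by
  have hA_ne j := (hA j).1
  have hB_ne j := (hB j).1
  refine ⟨⟨univ_pi_nonempty_iff.2 hA_ne, univ_pi_nonempty_iff.2 hB_ne,
      setOf_forall_exists_piEdist_lt_eq_univ_pi A fun j => (hA j).2,
      setOf_forall_exists_piEdist_lt_eq_univ_pi B fun j => (hB j).2⟩,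
    fun x => piInfEdist_univ_pi x B, piHstar_univ_pi A B hA_ne, ?_⟩
  rw [piHstar_univ_pi A B hA_ne, piHstar_univ_pi B A hB_ne, ← iSup_sup_eq]
  simp only [EMetric.hausdorffEdist, Metric.hausdorffEDist_def]

/-- For nonempty closed sets `A j, B j`: products are nonempty closed, and the point-set
distance, Hausdorff pre-distance and Hausdorff distance of the products (for the sup
extended metric) are the suprema of the factorwise ones. -/
theorem stmt_13 [Nonempty J] (A B : ∀ j, Set (X j))
    (hA : ∀ j, (A j).Nonempty ∧ IsClosed (A j))
    (hB : ∀ j, (B j).Nonempty ∧ IsClosed (B j)) :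
    ((Set.univ.pi A).Nonempty ∧ (Set.univ.pi B).Nonempty ∧
      {x : ∀ j, X j | ∀ ε : ℝ≥0∞, 0 < ε → ∃ a ∈ Set.univ.pi A, piEdist x a < ε} =
        Set.univ.pi A ∧
      {x : ∀ j, X j | ∀ ε : ℝ≥0∞, 0 < ε → ∃ b ∈ Set.univ.pi B, piEdist x b < ε} =
        Set.univ.pi B) ∧
    (∀ x : ∀ j, X j,
      piInfEdist x (Set.univ.pi B) = ⨆ j, EMetric.infEdist (x j) (B j)) ∧
    (piHstar (Set.univ.pi A) (Set.univ.pi B) = ⨆ j, ⨆ a ∈ A j, EMetric.infEdist a (B j)) ∧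
    (max (piHstar (Set.univ.pi A) (Set.univ.pi B)) (piHstar (Set.univ.pi B) (Set.univ.pi A)) =
      ⨆ j, EMetric.hausdorffEdist (A j) (B j)) :=
  stmt_13_general A B hA hB
end

section
/- Let (X,d) be a metric space and u, v be normal upper semicontinuous fuzzy sets in X. Define d̄ on X×[0,1] by d̄((x,α),(y,β)) = d(x,y) + |α−β| and let H_end(u,v) be the Hausdorff distance between the endographs end u = {(x,t) ∈ X×[0,1] : u(x) ≥ t} and end v with respect to d̄. Then for p ≥ 1 and any measurable function f : [0,1] → [0,∞] with f(α) ≥ H([u]_α, [v]_α) for all α, one has (∫₀¹ f(α)^p dα)^{1/p} ≥ (H_end(u,v)^{p+1}/(p+1))^{1/p}. -/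
open Set ENNReal MeasureTheory

variable {X : Type*} [MetricSpace X]

/-- The metric `d̄((x,α),(y,β)) = d(x,y) + |α − β|` on `X × [0,1]` (as an extended distance). -/
noncomputable def sumDist (p q : X × ℝ) : ℝ≥0∞ := edist p.1 q.1 + edist p.2 q.2

/-- The endograph of a fuzzy set `u`, as a subset of `X × [0,1] ⊆ X × ℝ`. -/
def endo (u : X → ℝ) : Set (X × ℝ) := {p | p.2 ∈ Set.Icc (0 : ℝ) 1 ∧ p.2 ≤ u p.1}

/-- The Hausdorff distance between subsets of `X × ℝ` induced by `sumDist`. -/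
noncomputable def hausSum (S T : Set (X × ℝ)) : ℝ≥0∞ :=
  max (⨆ p ∈ S, ⨅ q ∈ T, sumDist p q) (⨆ q ∈ T, ⨅ p ∈ S, sumDist p q)

/-! If the point `(x, t)` of `end u` lies at `d̄`-distance `c` from `end v`, then for every level
`β ∈ (t - c, t]` the point `x ∈ [u]_β` lies at distance at least `c - (t - β)` from `[v]_β`, so
`H([u]_β, [v]_β) ≥ β - (t - c)`. Integrating the `p`-th power of this ramp over `(t - c, t]`
gives `∫₀¹ f^p ≥ c^(p+1)/(p+1)`, and taking the supremum over both sides of the Hausdorff distance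
gives the claim. -/

lemma sumDist_comm (p q : X × ℝ) : sumDist p q = sumDist q p := by
  simp only [sumDist, edist_comm]

lemma hausSum_eq_max (S T : Set (X × ℝ)) :
    hausSum S T =
      max (⨆ p ∈ S, ⨅ q ∈ T, sumDist p q) (⨆ q ∈ T, ⨅ p ∈ S, sumDist q p) := by
  unfold hausSum
  congr! 7 with q _ p _
  exact sumDist_comm p q

theorem ofReal_rpow_le_mul_setLIntegral_rpow {a b p : ℝ} (hab : a ≤ b) (hp : 0 ≤ p)
    {g : ℝ → ℝ≥0∞} (hg : ∀ β ∈ Ioc a b, ENNReal.ofReal (β - a) ≤ g β) :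
    ENNReal.ofReal (b - a) ^ (p + 1) ≤ ENNReal.ofReal (p + 1) * ∫⁻ β in Ioc a b, g β ^ p := by
  have hp1 : 0 < p + 1 := by linarith
  have hramp : ∫⁻ β in Ioc a b, ENNReal.ofReal ((β - a) ^ p) =
      ENNReal.ofReal ((b - a) ^ (p + 1) / (p + 1)) := by
    rw [← ofReal_integral_eq_lintegral_ofReal, ← intervalIntegral.integral_of_le hab,
      intervalIntegral.integral_comp_sub_right (· ^ p) a, sub_self,
      integral_rpow (Or.inl (by linarith)), Real.zero_rpow hp1.ne', sub_zero]
    · exact ((Real.continuous_rpow_const hp).comp (continuous_sub_right a)).integrableOn_Ioc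
    · filter_upwards [ae_restrict_mem measurableSet_Ioc] with β hβ
      exact Real.rpow_nonneg (sub_nonneg.2 hβ.1.le) p
  calc ENNReal.ofReal (b - a) ^ (p + 1)
      = ENNReal.ofReal (p + 1) * ENNReal.ofReal ((b - a) ^ (p + 1) / (p + 1)) := by
        rw [← ENNReal.ofReal_mul hp1.le, mul_div_cancel₀ _ hp1.ne',
          ENNReal.ofReal_rpow_of_nonneg (sub_nonneg.2 hab) hp1.le]
    _ ≤ ENNReal.ofReal (p + 1) * ∫⁻ β in Ioc a b, g β ^ p := by
        rw [← hramp]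
        refine mul_le_mul_right (setLIntegral_mono' measurableSet_Ioc fun β hβ => ?_) _
        rw [← ENNReal.ofReal_rpow_of_nonneg (sub_nonneg.2 hβ.1.le) hp]
        exact ENNReal.rpow_le_rpow (hg β hβ) hp

theorem iInf_sumDist_endo_rpow_le {u v : X → ℝ} (hv0 : ∀ x, 0 ≤ v x) {p : ℝ} (hp : 0 ≤ p)
    {f : ℝ → ℝ≥0∞}
    (hfH : ∀ α ∈ Ioc (0 : ℝ) 1,
      Metric.hausdorffEDist {x | α ≤ u x} {x | α ≤ v x} ≤ f α)
    {q : X × ℝ} (hq : q ∈ endo u) :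
    (⨅ r ∈ endo v, sumDist q r) ^ (p + 1) ≤
      ENNReal.ofReal (p + 1) * ∫⁻ α in Icc (0 : ℝ) 1, f α ^ p := by
  obtain ⟨x, t⟩ := q
  obtain ⟨⟨ht0, ht1⟩, htu⟩ := hq
  have hct : ⨅ r ∈ endo v, sumDist (x, t) r ≤ ENNReal.ofReal t :=
    (iInf₂_le (x, 0) ⟨⟨le_rfl, zero_le_one⟩, hv0 x⟩).trans_eq
      (by simp [sumDist, edist_dist, abs_of_nonneg ht0])
  obtain ⟨c, hc0, hc⟩ : ∃ c : ℝ, 0 ≤ c ∧ ENNReal.ofReal c = ⨅ r ∈ endo v, sumDist (x, t) r :=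
    ⟨_, toReal_nonneg, ofReal_toReal (ne_top_of_le_ne_top ofReal_ne_top hct)⟩
  rw [← hc] at hct ⊢
  have hct' : c ≤ t := (ENNReal.ofReal_le_ofReal_iff ht0).1 hct
  have hramp_le : ∀ β ∈ Ioc (t - c) t, ENNReal.ofReal (β - (t - c)) ≤ f β := by
    rintro β ⟨hβc, hβt⟩
    have hβ0 : 0 < β := by linarith
    calc ENNReal.ofReal (β - (t - c)) = ENNReal.ofReal c - ENNReal.ofReal (t - β) := by
          rw [← ENNReal.ofReal_sub _ (sub_nonneg.2 hβt)]
          ring_nf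
      _ ≤ Metric.infEDist x {y | β ≤ v y} := by
          refine le_iInf₂ fun y hy => tsub_le_iff_right.2 ?_
          refine (hc.trans_le (iInf₂_le (y, β) ⟨⟨hβ0.le, hβt.trans ht1⟩, hy⟩)).trans_eq ?_
          simp [sumDist, edist_dist, Real.dist_eq, abs_of_nonneg (sub_nonneg.2 hβt)]
      _ ≤ Metric.hausdorffEDist {y | β ≤ u y} {y | β ≤ v y} :=
          Metric.infEDist_le_hausdorffEDist_of_mem (hβt.trans htu)
      _ ≤ f β := hfH β ⟨hβ0, hβt.trans ht1⟩
  calc ENNReal.ofReal c ^ (p + 1) = ENNReal.ofReal (t - (t - c)) ^ (p + 1) := by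
        rw [_root_.sub_sub_cancel]
    _ ≤ ENNReal.ofReal (p + 1) * ∫⁻ β in Ioc (t - c) t, f β ^ p :=
        ofReal_rpow_le_mul_setLIntegral_rpow (by linarith) hp hramp_le
    _ ≤ ENNReal.ofReal (p + 1) * ∫⁻ α in Icc (0 : ℝ) 1, f α ^ p := by
        gcongr
        exact Ioc_subset_Icc_self.trans (Icc_subset_Icc (by linarith) ht1)

theorem hausSum_endo_rpow_le {u v : X → ℝ} (hu0 : ∀ x, 0 ≤ u x) (hv0 : ∀ x, 0 ≤ v x)
    {p : ℝ} (hp : 0 ≤ p) {f : ℝ → ℝ≥0∞}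
    (hfH : ∀ α ∈ Ioc (0 : ℝ) 1,
      Metric.hausdorffEDist {x | α ≤ u x} {x | α ≤ v x} ≤ f α) :
    hausSum (endo u) (endo v) ^ (p + 1) ≤
      ENNReal.ofReal (p + 1) * ∫⁻ α in Icc (0 : ℝ) 1, f α ^ p := by
  have hfH' : ∀ α ∈ Ioc (0 : ℝ) 1,
      Metric.hausdorffEDist {x | α ≤ v x} {x | α ≤ u x} ≤ f α :=
    fun α hα => Metric.hausdorffEDist_comm.trans_le (hfH α hα)
  rw [← ENNReal.le_rpow_inv_iff (by linarith), hausSum_eq_max]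
  exact max_le
    (iSup₂_le fun q hq => (ENNReal.le_rpow_inv_iff (by linarith)).2
      (iInf_sumDist_endo_rpow_le hv0 hp hfH hq))
    (iSup₂_le fun q hq => (ENNReal.le_rpow_inv_iff (by linarith)).2
      (iInf_sumDist_endo_rpow_le hu0 hp hfH' hq))

theorem stmt_15_general (u v : X → ℝ)
    (hu01 : ∀ x, u x ∈ Set.Icc (0 : ℝ) 1) (hv01 : ∀ x, v x ∈ Set.Icc (0 : ℝ) 1)
    (p : ℝ) (hp : 1 ≤ p) (f : ℝ → ℝ≥0∞)
    (hfH : ∀ α : ℝ,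
      EMetric.hausdorffEdist
          (if α ≤ 0 then closure {x | 0 < u x} else {x | α ≤ u x})
          (if α ≤ 0 then closure {x | 0 < v x} else {x | α ≤ v x}) ≤ f α) :
    (hausSum (endo u) (endo v) ^ (p + 1) / ENNReal.ofReal (p + 1)) ^ (1 / p) ≤
      (∫⁻ α in Set.Icc (0 : ℝ) 1, f α ^ p) ^ (1 / p) := by
  have hfH' : ∀ α ∈ Ioc (0 : ℝ) 1,
      Metric.hausdorffEDist {x | α ≤ u x} {x | α ≤ v x} ≤ f α := by
    rintro α ⟨hα0, -⟩
    have h := hfH α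
    rw [if_neg hα0.not_ge, if_neg hα0.not_ge] at h
    exact h
  refine ENNReal.rpow_le_rpow (ENNReal.div_le_of_le_mul' ?_) (by positivity)
  exact hausSum_endo_rpow_le (fun x => (hu01 x).1) (fun x => (hv01 x).1) (by linarith) hfH'

/-- For normal upper semicontinuous fuzzy sets `u, v`, `p ≥ 1` and any measurable
`f : [0,1] → [0,∞]` dominating `α ↦ H([u]_α, [v]_α)`, one has
`(∫₀¹ f^p)^{1/p} ≥ (H_end(u,v)^{p+1}/(p+1))^{1/p}`. -/
theorem stmt_15 (u v : X → ℝ)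
    (hu01 : ∀ x, u x ∈ Set.Icc (0 : ℝ) 1) (hv01 : ∀ x, v x ∈ Set.Icc (0 : ℝ) 1)
    (hu : ∀ α ∈ Set.Ioc (0 : ℝ) 1, {x | α ≤ u x}.Nonempty ∧ IsClosed {x | α ≤ u x})
    (hv : ∀ α ∈ Set.Ioc (0 : ℝ) 1, {x | α ≤ v x}.Nonempty ∧ IsClosed {x | α ≤ v x})
    (p : ℝ) (hp : 1 ≤ p) (f : ℝ → ℝ≥0∞) (hf : Measurable f)
    (hfH : ∀ α : ℝ,
      EMetric.hausdorffEdist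
          (if α ≤ 0 then closure {x | 0 < u x} else {x | α ≤ u x})
          (if α ≤ 0 then closure {x | 0 < v x} else {x | α ≤ v x}) ≤ f α) :
    (hausSum (endo u) (endo v) ^ (p + 1) / ENNReal.ofReal (p + 1)) ^ (1 / p) ≤
      (∫⁻ α in Set.Icc (0 : ℝ) 1, f α ^ p) ^ (1 / p) :=
  stmt_15_general u v hu01 hv01 p hp f hfH
end

section
/- Let (X,d) be a metric space and u, v normal upper semicontinuous fuzzy sets in X. Define d̂ on X×[0,1] by d̂((x,α),(y,β)) = max{d(x,y), |α−β|} and H'_end(u,v) the Hausdorff distance between endographs with respect to d̂. Then for p ≥ 1 and any measurable f : [0,1] → [0,∞] with f(α) ≥ H([u]_α, [v]_α) for all α, one has (∫₀¹ f(α)^p dα)^{1/p} ≥ H'_end(u,v)^{1+1/p}. -/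
open Set ENNReal MeasureTheory

variable {X : Type*} [MetricSpace X]

/-!
If `(x, t) ∈ end u` lies at distance more than `r` from `end v`, then `r < t` (since
`(x, 0) ∈ end v`), and for every level `α ∈ (t - r, t]` the point `x ∈ [u]_α` is at
distance at least `r` from `[v]_α`: a point `y ∈ [v]_α` gives `(y, α) ∈ end v`, whose
`α`-coordinate is within `r` of `t`. Hence `f ≥ r` on an interval of length `r`, so
`r ^ (p + 1) ≤ ∫₀¹ f ^ p`, and `H'_end(u,v) ^ (1 + 1/p) = (H'_end(u,v) ^ (p + 1)) ^ (1/p)`.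
-/

open scoped NNReal
open Metric

theorem ENNReal.rpow_le_of_forall_nnreal_lt {a b : ℝ≥0∞} {q : ℝ} (hq : 0 < q)
    (h : ∀ r : ℝ≥0, (r : ℝ≥0∞) < a → (r : ℝ≥0∞) ^ q ≤ b) : a ^ q ≤ b :=
  (le_rpow_inv_iff hq).1 <| le_of_forall_nnreal_lt fun r hr => (le_rpow_inv_iff hq).2 (h r hr)

lemma infEDist_endo_le {v : X → ℝ} (hv : ∀ x, 0 ≤ v x) (x : X) {t : ℝ} (ht : 0 ≤ t) :
    infEDist (x, t) (endo v) ≤ ENNReal.ofReal t := by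
  have hx0 : ((x, 0) : X × ℝ) ∈ endo v := ⟨⟨le_rfl, zero_le_one⟩, hv x⟩
  refine (infEDist_le_edist_of_mem hx0).trans_eq ?_
  rw [Prod.edist_eq, edist_self, edist_dist, Real.dist_eq, sub_zero, abs_of_nonneg ht,
    max_eq_right zero_le]

lemma le_infEDist_of_lt_infEDist_endo {v : X → ℝ} {x : X} {t α : ℝ} {r : ℝ≥0}
    (hr : (r : ℝ≥0∞) < infEDist (x, t) (endo v)) (hα : α ∈ Ioc (t - r) t) (hα0 : 0 < α)
    (ht1 : t ≤ 1) : (r : ℝ≥0∞) ≤ infEDist x {y | α ≤ v y} := by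
  refine le_infEDist.2 fun y hy => ?_
  have hyα : ((y, α) : X × ℝ) ∈ endo v := ⟨⟨hα0.le, hα.2.trans ht1⟩, hy⟩
  have hr' : (r : ℝ≥0∞) < max (edist x y) (edist t α) :=
    hr.trans_le (infEDist_le_edist_of_mem hyα)
  have htα : edist t α ≤ r := by
    rw [edist_dist, Real.dist_eq, abs_of_nonneg (by linarith [hα.2]), ← ofReal_coe_nnreal]
    exact ofReal_le_ofReal (by linarith [hα.1])
  exact (lt_max_iff.1 hr').resolve_right htα.not_gt |>.le

lemma coe_rpow_add_one_le_lintegral_of_lt_infEDist_endo {u v : X → ℝ} (hv : ∀ x, 0 ≤ v x)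
    {p : ℝ} (hp : 0 ≤ p) {f : ℝ → ℝ≥0∞}
    (hfH : ∀ α ∈ Ioc (0 : ℝ) 1, hausdorffEDist {x | α ≤ u x} {x | α ≤ v x} ≤ f α)
    {a : X × ℝ} (ha : a ∈ endo u) {r : ℝ≥0} (hr : (r : ℝ≥0∞) < infEDist a (endo v)) :
    (r : ℝ≥0∞) ^ (p + 1) ≤ ∫⁻ α in Icc (0 : ℝ) 1, f α ^ p := by
  obtain ⟨x, t⟩ := a
  obtain ⟨⟨ht0, ht1⟩, htu⟩ := ha
  have hrt : (r : ℝ) < t := by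
    have := hr.trans_le (infEDist_endo_le hv x ht0)
    rwa [lt_ofReal_iff_toReal_lt coe_ne_top, coe_toReal] at this
  have hlevel : Ioc (t - r) t ⊆ Ioc 0 1 := fun α hα => ⟨by linarith [hα.1], hα.2.trans ht1⟩
  have hf : ∀ α ∈ Ioc (t - r) t, (r : ℝ≥0∞) ^ p ≤ f α ^ p := fun α hα =>
    rpow_le_rpow ((le_infEDist_of_lt_infEDist_endo hr hα (hlevel hα).1 ht1).trans <|
      (infEDist_le_hausdorffEDist_of_mem (show x ∈ {y | α ≤ u y} from hα.2.trans htu)).trans (hfH α (hlevel hα))) hp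
  calc (r : ℝ≥0∞) ^ (p + 1)
      = (r : ℝ≥0∞) ^ p * volume (Ioc (t - r) t) := by
        rw [rpow_add_of_nonneg _ _ hp zero_le_one, rpow_one, Real.volume_Ioc, _root_.sub_sub_cancel,
          ofReal_coe_nnreal]
    _ = ∫⁻ _ in Ioc (t - r) t, (r : ℝ≥0∞) ^ p := (setLIntegral_const _ _).symm
    _ ≤ ∫⁻ α in Ioc (t - r) t, f α ^ p := setLIntegral_mono' measurableSet_Ioc hf
    _ ≤ ∫⁻ α in Icc (0 : ℝ) 1, f α ^ p := lintegral_mono_set (hlevel.trans Ioc_subset_Icc_self)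

lemma hausdorffEDist_endo_rpow_add_one_le_lintegral {u v : X → ℝ} (hu : ∀ x, 0 ≤ u x)
    (hv : ∀ x, 0 ≤ v x) {p : ℝ} (hp : 0 ≤ p) {f : ℝ → ℝ≥0∞}
    (hfH : ∀ α ∈ Ioc (0 : ℝ) 1, hausdorffEDist {x | α ≤ u x} {x | α ≤ v x} ≤ f α) :
    hausdorffEDist (endo u) (endo v) ^ (p + 1) ≤ ∫⁻ α in Icc (0 : ℝ) 1, f α ^ p := by
  have hq : 0 < p + 1 := by linarith
  rw [← le_rpow_inv_iff hq]
  refine hausdorffEDist_le_of_infEDist (fun a ha => ?_) (fun a ha => ?_) <;>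
    rw [le_rpow_inv_iff hq] <;> refine rpow_le_of_forall_nnreal_lt hq fun r hr => ?_
  · exact coe_rpow_add_one_le_lintegral_of_lt_infEDist_endo hv hp hfH ha hr
  · refine coe_rpow_add_one_le_lintegral_of_lt_infEDist_endo hu hp (fun α hα => ?_) ha hr
    exact hausdorffEDist_comm.trans_le (hfH α hα)

theorem stmt_16_general (u v : X → ℝ)
    (hu01 : ∀ x, u x ∈ Set.Icc (0 : ℝ) 1) (hv01 : ∀ x, v x ∈ Set.Icc (0 : ℝ) 1)
    (p : ℝ) (hp : 1 ≤ p) (f : ℝ → ℝ≥0∞)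
    (hfH : ∀ α : ℝ,
      EMetric.hausdorffEdist
          (if α ≤ 0 then closure {x | 0 < u x} else {x | α ≤ u x})
          (if α ≤ 0 then closure {x | 0 < v x} else {x | α ≤ v x}) ≤ f α) :
    EMetric.hausdorffEdist (endo u) (endo v) ^ (1 + 1 / p) ≤
      (∫⁻ α in Set.Icc (0 : ℝ) 1, f α ^ p) ^ (1 / p) := by
  have hp0 : 0 < p := by linarith
  have hlevel : ∀ α ∈ Ioc (0 : ℝ) 1,
      hausdorffEDist {x | α ≤ u x} {x | α ≤ v x} ≤ f α := fun α hα => by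
    have h := hfH α
    rwa [if_neg hα.1.not_ge, if_neg hα.1.not_ge] at h
  have hexp : 1 + 1 / p = (p + 1) * (1 / p) := by field_simp
  rw [hexp, rpow_mul]
  exact rpow_le_rpow (hausdorffEDist_endo_rpow_add_one_le_lintegral (fun x => (hu01 x).1)
    (fun x => (hv01 x).1) hp0.le hlevel) (by positivity)

/-- For normal upper semicontinuous fuzzy sets `u, v`, `p ≥ 1` and any measurable
`f : [0,1] → [0,∞]` dominating `α ↦ H([u]_α, [v]_α)`, one has
`(∫₀¹ f^p)^{1/p} ≥ H'_end(u,v)^{1+1/p}`, where `H'_end` is the endograph Hausdorff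
distance for the max metric on `X × [0,1]`. -/
theorem stmt_16 (u v : X → ℝ)
    (hu01 : ∀ x, u x ∈ Set.Icc (0 : ℝ) 1) (hv01 : ∀ x, v x ∈ Set.Icc (0 : ℝ) 1)
    (hu : ∀ α ∈ Set.Ioc (0 : ℝ) 1, {x | α ≤ u x}.Nonempty ∧ IsClosed {x | α ≤ u x})
    (hv : ∀ α ∈ Set.Ioc (0 : ℝ) 1, {x | α ≤ v x}.Nonempty ∧ IsClosed {x | α ≤ v x})
    (p : ℝ) (hp : 1 ≤ p) (f : ℝ → ℝ≥0∞) (hf : Measurable f)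
    (hfH : ∀ α : ℝ,
      EMetric.hausdorffEdist
          (if α ≤ 0 then closure {x | 0 < u x} else {x | α ≤ u x})
          (if α ≤ 0 then closure {x | 0 < v x} else {x | α ≤ v x}) ≤ f α) :
    EMetric.hausdorffEdist (endo u) (endo v) ^ (1 + 1 / p) ≤
      (∫⁻ α in Set.Icc (0 : ℝ) 1, f α ^ p) ^ (1 / p) :=
  stmt_16_general u v hu01 hv01 p hp f hfH
end

section
/- Let (X, d_X) be a metric subspace of (Y, d_Y), and for u ∈ F(X) define u^Y ∈ F_{USC}(Y) by [u^Y]_α = ⋂_{β<α} cl_Y([u]_β) for α ∈ (0,1]. If u is an upper semicontinuous fuzzy set in X, then the set Υ(u)^Y = {α ∈ (0,1] : [u^Y]_α ⊋ cl_Y([u]_α)} has cardinality at most the cardinality of Y \ X. In particular, if Y \ X is at most countable, then Υ(u)^Y is at most countable. -/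
open Set

/-- Let `X` be a metric subspace of `Y` and `u` an upper semicontinuous fuzzy set in `X`.
Define `[u^Y]_α = ⋂_{β < α} cl_Y [u]_β`. Then the set
`Υ(u)^Y = {α ∈ (0,1] : [u^Y]_α ⊋ cl_Y [u]_α}` has cardinality at most that of `Y \ X`
(there is an injection of it into `Y \ X`); in particular, if `Y \ X` is at most countable
then so is `Υ(u)^Y`. -/
theorem stmt_19 {Y : Type*} [MetricSpace Y] (X : Set Y) (u : X → ℝ)
    (hu01 : ∀ x, u x ∈ Set.Icc (0 : ℝ) 1)
    (husc : ∀ α ∈ Set.Ioc (0 : ℝ) 1, IsClosed {x : X | α ≤ u x}) :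
    Nonempty (↥{α : ℝ | α ∈ Set.Ioc (0 : ℝ) 1 ∧
        closure (Subtype.val '' {x : X | α ≤ u x}) ⊂
          ⋂ β ∈ Set.Ioo (0 : ℝ) α, closure (Subtype.val '' {x : X | β ≤ u x})} ↪
      ↥(Xᶜ)) ∧
    ((Xᶜ : Set Y).Countable →
      {α : ℝ | α ∈ Set.Ioc (0 : ℝ) 1 ∧
        closure (Subtype.val '' {x : X | α ≤ u x}) ⊂
          ⋂ β ∈ Set.Ioo (0 : ℝ) α, closure (Subtype.val '' {x : X | β ≤ u x})}.Countable) := by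
  set S := {α : ℝ | α ∈ Set.Ioc (0 : ℝ) 1 ∧
      closure (Subtype.val '' {x : X | α ≤ u x}) ⊂
        ⋂ β ∈ Set.Ioo (0 : ℝ) α, closure (Subtype.val '' {x : X | β ≤ u x})} with hSdef
  have key : ∀ α ∈ S, ∃ y : Y, y ∈ Xᶜ ∧
      (∀ β ∈ Set.Ioo (0:ℝ) α, y ∈ closure (Subtype.val '' {x : X | β ≤ u x})) ∧
      y ∉ closure (Subtype.val '' {x : X | α ≤ u x}) := by
    rintro α ⟨hα, hsub⟩
    obtain ⟨y, hy1, hy2⟩ := exists_of_ssubset hsub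
    simp only [mem_iInter] at hy1
    refine ⟨y, ?_, fun β hβ => hy1 β hβ, hy2⟩
    intro hyX
    apply hy2
    have hx : α ≤ u ⟨y, hyX⟩ := by
      by_contra h
      push_neg at h
      set β := (u ⟨y, hyX⟩ + α)/2 with hβdef
      have h0 : 0 ≤ u ⟨y, hyX⟩ := (hu01 _).1
      have hβ1 : 0 < β := by simp only [hβdef]; linarith [hα.1]
      have hβ2 : β < α := by simp only [hβdef]; linarith
      have hβ3 : u ⟨y, hyX⟩ < β := by simp only [hβdef]; linarith
      have hyc := hy1 β ⟨hβ1, hβ2⟩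
      have hmem : (⟨y, hyX⟩ : X) ∈ closure {x : X | β ≤ u x} := closure_subtype.mpr hyc
      have hcl := husc β ⟨hβ1, (hβ2.trans_le hα.2).le⟩
      rw [hcl.closure_eq] at hmem
      exact absurd hmem (by simpa using hβ3)
    exact subset_closure ⟨⟨y, hyX⟩, hx, rfl⟩
  choose w hw1 hw2 hw3 using key
  have hinj : ∀ a ∈ S, ∀ b ∈ S, ∀ (ha : a ∈ S) (hb : b ∈ S), w a ha = w b hb → a = b := by
    intro a haS b hbS ha hb heq
    by_contra hne
    rcases lt_or_gt_of_ne hne with hlt | hlt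
    · have := hw2 b hb a ⟨ha.1.1, hlt⟩
      rw [← heq] at this
      exact hw3 a ha this
    · have := hw2 a ha b ⟨hb.1.1, hlt⟩
      rw [heq] at this
      exact hw3 b hb this
  have emb : ↥S ↪ ↥(Xᶜ) :=
    ⟨fun a => ⟨w a a.2, hw1 a a.2⟩, by
      rintro ⟨a, ha⟩ ⟨b, hb⟩ h
      simp only [Subtype.mk.injEq] at h
      exact Subtype.ext (hinj a ha b hb ha hb h)⟩
  refine ⟨⟨emb⟩, fun hc => ?_⟩
  haveI := hc.to_subtype
  haveI : Countable ↥S := Function.Injective.countable emb.injective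
  exact Set.countable_coe_iff.mp this
end
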